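/- arXiv:1605.09541 — 2 statements merged into one kernel-verified Lean document; each statement's English description precedes it below -/
import Mathlib

section
/- For every even positive integer m, Σ_{n=1}^{∞} (ζ(2n)/(n·16^n)) · C(2n, m) = (1/m) · (ζ(m)(1 − 1/2^m) − 1), where C(2n, m) denotes the binomial coefficient. -/
open Real

/-- Real Riemann zeta values via the series `∑ 1/k^m`. -/
noncomputable def zetaR (m : ℕ) : ℝ := ∑' k : ℕ, 1 / ((k : ℝ) + 1) ^ m

/-!
Expanding `ζ(2n) = ∑ₖ (k+1)^(-2n)` and swapping the (nonnegative) double sum, the inner sum over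
`n` is the power series `∑ₙ C(2n, m)/n · x^(2n)` at `x = 1/(4(k+1))`. Since
`C(2n, m)/n = (2/m) · C(2n-1, m-1)`, it is `2x/m` times the odd part of
`∑ⱼ C(j, m-1) xʲ = x^(m-1)/(1-x)^m`, namely `((x/(1-x))^m + (x/(1+x))^m)/m`, and for our `x`
this is `((4k+3)^(-m) + (4k+5)^(-m))/m`. Summing over `k` leaves `∑ j^(-m)` over odd `j ≥ 3`,
which is `(1 - 2^(-m)) ζ(m) - 1`.
-/

section PowerSeries

variable {𝕜 : Type*} [NormedField 𝕜]

theorem hasSum_choose_mul_pow [CompleteSpace 𝕜] (r : ℕ) {x : 𝕜} (hx : ‖x‖ < 1) :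
    HasSum (fun j : ℕ => (j.choose r : 𝕜) * x ^ j) (x ^ r / (1 - x) ^ (r + 1)) := by
  rw [← hasSum_nat_add_iff' r]
  have hlow : ∑ i ∈ Finset.range r, (i.choose r : 𝕜) * x ^ i = 0 :=
    Finset.sum_eq_zero fun i hi => by simp [Nat.choose_eq_zero_of_lt (Finset.mem_range.1 hi)]
  rw [hlow, sub_zero, div_eq_mul_one_div]
  refine ((hasSum_choose_mul_geometric_of_norm_lt_one r hx).mul_left (x ^ r)).congr_fun fun n => ?_
  rw [pow_add]
  ring

theorem HasSum.odd_part [CharZero 𝕜] {a : ℕ → 𝕜} {x A B : 𝕜}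
    (hA : HasSum (fun j => a j * x ^ j) A) (hB : HasSum (fun j => a j * (-x) ^ j) B) :
    HasSum (fun n => a (2 * n + 1) * x ^ (2 * n + 1)) ((A - B) / 2) := by
  have hinj : Function.Injective (fun n : ℕ => 2 * n + 1) := fun p q h => by simp_all
  have hvanish : ∀ j ∉ Set.range (fun n : ℕ => 2 * n + 1),
      (a j * x ^ j - a j * (-x) ^ j) / 2 = 0 := by
    intro j hj
    have heven : Even j := Nat.not_odd_iff_even.1 fun ⟨n, hn⟩ => hj ⟨n, hn.symm⟩
    simp [heven.neg_pow]
  refine ((hinj.hasSum_iff hvanish).2 ((hA.sub hB).div_const 2)).congr_fun fun n => ?_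
  simp only [Function.comp, (odd_two_mul_add_one n).neg_pow]
  ring

theorem hasSum_choose_odd_mul_pow [CompleteSpace 𝕜] [CharZero 𝕜] {r : ℕ} (hr : Odd r) {x : 𝕜}
    (hx : ‖x‖ < 1) :
    HasSum (fun n : ℕ => ((2 * n + 1).choose r : 𝕜) * x ^ (2 * n + 1))
      ((x ^ r / (1 - x) ^ (r + 1) + x ^ r / (1 + x) ^ (r + 1)) / 2) := by
  have hA := hasSum_choose_mul_pow r hx
  have hB := hasSum_choose_mul_pow r (x := -x) (by rwa [norm_neg])
  rw [hr.neg_pow, sub_neg_eq_add] at hB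
  convert hA.odd_part hB using 2
  ring

theorem hasSum_choose_even_div_mul_pow [CompleteSpace 𝕜] [CharZero 𝕜] {m : ℕ} (hm : Even m)
    (hm0 : m ≠ 0) {x : 𝕜} (hx : ‖x‖ < 1) :
    HasSum (fun n : ℕ => ((2 * (n + 1)).choose m : 𝕜) / ((n : 𝕜) + 1) * x ^ (2 * (n + 1)))
      (1 / m * ((x / (1 - x)) ^ m + (x / (1 + x)) ^ m)) := by
  obtain ⟨r, rfl⟩ : ∃ r, m = r + 1 := Nat.exists_eq_add_one.2 (Nat.pos_of_ne_zero hm0)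
  have hr : Odd r := by simpa [Nat.even_add_one] using hm
  have hsum : 2 * x / (r + 1) * ((x ^ r / (1 - x) ^ (r + 1) + x ^ r / (1 + x) ^ (r + 1)) / 2) =
      1 / ((r + 1 : ℕ) : 𝕜) * ((x / (1 - x)) ^ (r + 1) + (x / (1 + x)) ^ (r + 1)) := by
    rw [div_pow, div_pow]
    push_cast
    ring
  rw [← hsum]
  refine ((hasSum_choose_odd_mul_pow hr hx).mul_left (2 * x / (r + 1))).congr_fun fun n => ?_
  have hchoose : ((2 * (n + 1)).choose (r + 1) : 𝕜) * (r + 1) =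
      2 * ((n : 𝕜) + 1) * ((2 * n + 1).choose r : ℕ) := by
    exact_mod_cast (Nat.add_one_mul_choose_eq (2 * n + 1) r).symm.trans (by ring)
  field_simp
  linear_combination x * x ^ (2 * n + 1) * hchoose

end PowerSeries

theorem HasSum.even_add_odd_pairs {α : Type*} [NormedAddCommGroup α] [CompleteSpace α]
    {f : ℕ → α} {a : α} (hf : HasSum f a) :
    HasSum (fun k => f (2 * k) + f (2 * k + 1)) a := by
  have he := (hf.summable.comp_injective (mul_right_injective₀ (two_ne_zero' ℕ))).hasSum
  have ho := (hf.summable.comp_injective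
    (fun p q h => by simpa using h : Function.Injective (fun k : ℕ => 2 * k + 1))).hasSum
  rw [hf.unique (he.even_add_odd ho)]
  exact he.add ho

theorem tsum_tsum_eq_of_hasSum_of_nonneg {β γ : Type*} {f : β → γ → ℝ} (hf : ∀ b c, 0 ≤ f b c)
    {g : γ → ℝ} (hfg : ∀ c, HasSum (fun b => f b c) (g c)) (hg : Summable g) :
    ∑' b, ∑' c, f b c = ∑' c, g c := by
  have hswap : Summable (Function.uncurry fun c b => f b c) :=
    (summable_prod_of_nonneg fun p => hf p.2 p.1).2
      ⟨fun c => (hfg c).summable, by simpa only [(hfg _).tsum_eq] using hg⟩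
  exact hswap.tsum_comm.trans (tsum_congr fun c => (hfg c).tsum_eq)

theorem hasSum_zetaR {m : ℕ} (hm : 1 < m) :
    HasSum (fun k : ℕ => 1 / ((k : ℝ) + 1) ^ m) (zetaR m) :=
  Summable.hasSum <| by
    exact_mod_cast (summable_nat_add_iff 1).2 (Real.summable_one_div_nat_pow.2 hm)

theorem hasSum_one_div_two_mul_add_one_pow {m : ℕ} (hm : 1 < m) :
    HasSum (fun k : ℕ => 1 / (2 * (k : ℝ) + 1) ^ m) (zetaR m * (1 - 1 / 2 ^ m)) := by
  have hz := hasSum_zetaR hm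
  have hodd : HasSum (fun k : ℕ => 1 / ((2 * k + 1 : ℕ) + 1 : ℝ) ^ m) (1 / 2 ^ m * zetaR m) := by
    refine (hz.mul_left (1 / 2 ^ m)).congr_fun fun k => ?_
    push_cast
    rw [show (2 * (k : ℝ) + 1 + 1) = 2 * (k + 1) by ring, mul_pow]
    field_simp
  obtain ⟨T, heven⟩ := hz.summable.comp_injective (mul_right_injective₀ (two_ne_zero' ℕ))
  have htot := hz.unique (heven.even_add_odd hodd)
  rw [show zetaR m * (1 - 1 / 2 ^ m) = T by linear_combination htot]
  refine heven.congr_fun fun k => ?_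
  simp

theorem hasSum_one_div_four_mul_add_three_pow_add_five_pow {m : ℕ} (hm : 1 < m) :
    HasSum (fun k : ℕ => (1 / (4 * (k : ℝ) + 3)) ^ m + (1 / (4 * (k : ℝ) + 5)) ^ m)
      (zetaR m * (1 - 1 / 2 ^ m) - 1) := by
  have h := hasSum_one_div_two_mul_add_one_pow hm
  rw [← hasSum_nat_add_iff' 1] at h
  simp only [Finset.sum_range_one, Nat.cast_zero, mul_zero, zero_add, one_pow, div_one] at h
  refine h.even_add_odd_pairs.congr_fun fun k => ?_
  push_cast
  ring_nf

theorem hasSum_choose_even_div_mul_one_div_four_mul_pow {m : ℕ} (hm : Even m) (hm0 : m ≠ 0)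
    (k : ℕ) :
    HasSum (fun n : ℕ => ((2 * (n + 1)).choose m : ℝ) / ((n : ℝ) + 1) *
        (1 / (4 * ((k : ℝ) + 1))) ^ (2 * (n + 1)))
      (1 / m * ((1 / (4 * (k : ℝ) + 3)) ^ m + (1 / (4 * (k : ℝ) + 5)) ^ m)) := by
  have hx : ‖1 / (4 * ((k : ℝ) + 1))‖ < 1 := by
    rw [Real.norm_of_nonneg (by positivity), div_lt_one (by positivity)]
    linarith [k.cast_nonneg (α := ℝ)]
  have h3 : 1 / (4 * ((k : ℝ) + 1)) / (1 - 1 / (4 * ((k : ℝ) + 1))) = 1 / (4 * k + 3) := by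
    rw [one_sub_div (by positivity), div_div_div_cancel_right₀ (by positivity)]
    ring
  have h5 : 1 / (4 * ((k : ℝ) + 1)) / (1 + 1 / (4 * ((k : ℝ) + 1))) = 1 / (4 * k + 5) := by
    rw [one_add_div (by positivity), div_div_div_cancel_right₀ (by positivity)]
    ring
  simpa only [h3, h5] using hasSum_choose_even_div_mul_pow hm hm0 hx

theorem zeta_binom_sixteen_even (m : ℕ) (hm : Even m) (hm0 : 0 < m) :
    ∑' n : ℕ, zetaR (2 * (n + 1)) / (((n : ℝ) + 1) * 16 ^ (n + 1)) *
      (Nat.choose (2 * (n + 1)) m : ℝ) =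
      (1 / (m : ℝ)) * (zetaR m * (1 - 1 / 2 ^ m) - 1) := by
  have hm1 : 1 < m := by obtain ⟨c, rfl⟩ := hm; omega
  set f : ℕ → ℕ → ℝ := fun n k =>
    ((2 * (n + 1)).choose m : ℝ) / ((n : ℝ) + 1) * (1 / (4 * ((k : ℝ) + 1))) ^ (2 * (n + 1))
  have hrow : ∀ n : ℕ, zetaR (2 * (n + 1)) / (((n : ℝ) + 1) * 16 ^ (n + 1)) *
      ((2 * (n + 1)).choose m : ℝ) = ∑' k, f n k := by
    intro n
    rw [zetaR, ← tsum_div_const, ← tsum_mul_right]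
    refine tsum_congr fun k => ?_
    rw [show (16 : ℝ) ^ (n + 1) = 4 ^ (2 * (n + 1)) by rw [pow_mul]; norm_num]
    simp only [f, div_pow, mul_pow, one_pow]
    field_simp
  calc _ = ∑' n, ∑' k, f n k := tsum_congr hrow
    _ = ∑' k : ℕ, 1 / m * ((1 / (4 * (k : ℝ) + 3)) ^ m + (1 / (4 * (k : ℝ) + 5)) ^ m) :=
        tsum_tsum_eq_of_hasSum_of_nonneg (fun n k => by positivity)
          (hasSum_choose_even_div_mul_one_div_four_mul_pow hm hm0.ne')
          ((hasSum_one_div_four_mul_add_three_pow_add_five_pow hm1).mul_left _).summable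
    _ = _ := ((hasSum_one_div_four_mul_add_three_pow_add_five_pow hm1).mul_left _).tsum_eq
end

section
/- Σ_{n=1}^{∞} ζ(2n)·n²/16^n = (π/32)·(3π/2 − π²/4 − 1). -/
open Real

open Filter Topology Finset

/-!
Writing `ζ(2n) = ∑ₖ (k+1)^(-2n)` turns the series into a double series with nonnegative terms,
so the two summations may be swapped. For fixed `k` the inner sum is `∑ₙ n² qⁿ = q(1+q)/(1-q)³`
with `q = (4(k+1))⁻²`, which splits into partial fractions in `1/(4k+3)` and `1/(4k+5)`. Summed
over `k`, the three resulting series are tails of Leibniz's series for `π/4`, of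
`∑ 1/(2k+1)² = π²/8` and of `β(3) = ∑ (-1)ᵏ/(2k+1)³ = π³/32`, each grouped in consecutive pairs:
the grouped terms are nonnegative, which turns the merely conditional convergence of the
alternating series into a `HasSum`.
-/

theorem hasSum_sq_mul_geometric {𝕜 : Type*} [NormedField 𝕜] {r : 𝕜} (hr : ‖r‖ < 1) :
    HasSum (fun n : ℕ => ((n : 𝕜) + 1) ^ 2 * r ^ (n + 1)) (r * (1 + r) / (1 - r) ^ 3) := by
  have hr1 : 1 - r ≠ 0 := sub_ne_zero.2 fun h => by simp [← h] at hr
  have hchoose : ∀ n : ℕ, ((n : 𝕜) + 1) ^ 2 * r ^ (n + 1)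
      = r * (2 * ((n + 2).choose 2 * r ^ n) - (n + 1).choose 1 * r ^ n) := by
    intro n
    have h : (n + 2).choose 2 * 2 = (n + 2) * (n + 1) := by
      simpa using (Nat.add_one_mul_choose_eq (n + 1) 1).symm
    have h' : ((n + 2).choose 2 : 𝕜) * 2 = (n + 2) * (n + 1) := by
      simpa using congrArg (Nat.cast : ℕ → 𝕜) h
    rw [Nat.choose_one_right]
    push_cast
    linear_combination (-r * r ^ n) * h'
  have hvalue : r * (1 + r) / (1 - r) ^ 3
      = r * (2 * (1 / (1 - r) ^ (2 + 1)) - 1 / (1 - r) ^ (1 + 1)) := by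
    field_simp
    ring
  simp_rw [hchoose, hvalue]
  exact (((hasSum_choose_mul_geometric_of_norm_lt_one 2 hr).mul_left 2).sub
    (hasSum_choose_mul_geometric_of_norm_lt_one 1 hr)).mul_left r

theorem hasSum_tsum_swap_of_nonneg {β γ : Type*} {f : β → γ → ℝ} (hf : ∀ b c, 0 ≤ f b c)
    {g : β → ℝ} {a : ℝ} (hg : ∀ b, HasSum (f b) (g b)) (ha : HasSum g a) :
    HasSum (fun c => ∑' b, f b c) a := by
  have hsum : Summable (Function.uncurry f) :=
    (summable_prod_of_nonneg fun p => hf p.1 p.2).2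
      ⟨fun b => (hg b).summable, by simpa only [(hg _).tsum_eq] using ha.summable⟩
  have htotal : HasSum (Function.uncurry f) a :=
    (hsum.hasSum.prod_fiberwise hg).unique ha ▸ hsum.hasSum
  exact ((Equiv.prodComm γ β).hasSum_iff.2 htotal).prod_fiberwise
    fun c => (hsum.prod_symm.prod_factor c).hasSum

theorem tendsto_sum_range_shifted_pairs {α : Type*} [AddCommGroup α] [TopologicalSpace α]
    [IsTopologicalAddGroup α] {f : ℕ → α} {a : α}
    (h : Tendsto (fun n => ∑ i ∈ range n, f i) atTop (𝓝 a)) :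
    Tendsto (fun n => ∑ j ∈ range n, (f (2 * j + 1) + f (2 * j + 2))) atTop (𝓝 (a - f 0)) := by
  have hpairs : ∀ n, ∑ j ∈ range n, (f (2 * j + 1) + f (2 * j + 2))
      = ∑ i ∈ range (2 * n + 1), f i - f 0 := by
    intro n
    induction n with
    | zero => simp
    | succ n ih =>
      rw [sum_range_succ, ih, show 2 * (n + 1) + 1 = 2 * n + 1 + 1 + 1 by ring]
      simp only [sum_range_succ]
      abel
  have hodd : Tendsto (fun n : ℕ => 2 * n + 1) atTop atTop :=
    tendsto_atTop_atTop.2 fun b => ⟨b, fun n hn => by omega⟩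
  simpa only [hpairs, Function.comp_def] using (h.comp hodd).sub_const (f 0)

theorem hasSum_shifted_pairs_of_nonneg {f : ℕ → ℝ} {a : ℝ}
    (h : Tendsto (fun n => ∑ i ∈ range n, f i) atTop (𝓝 a))
    (hf : ∀ j, 0 ≤ f (2 * j + 1) + f (2 * j + 2)) :
    HasSum (fun j => f (2 * j + 1) + f (2 * j + 2)) (a - f 0) :=
  (hasSum_iff_tendsto_nat_of_nonneg hf _).2 (tendsto_sum_range_shifted_pairs h)

theorem hasSum_one_div_odd_sq : HasSum (fun k : ℕ => 1 / (2 * (k : ℝ) + 1) ^ 2) (π ^ 2 / 8) := by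
  have hzeta := hasSum_zeta_two
  have heven : HasSum (fun k : ℕ => 1 / ((2 * k : ℕ) : ℝ) ^ 2) (π ^ 2 / 24) := by
    have hfun : (fun k : ℕ => 1 / ((2 * k : ℕ) : ℝ) ^ 2) = fun k : ℕ => 1 / (k : ℝ) ^ 2 / 4 :=
      funext fun k => by push_cast; ring
    rw [hfun, show π ^ 2 / 24 = π ^ 2 / 6 / 4 by ring]
    exact hzeta.div_const 4
  have hinj : Function.Injective (fun k : ℕ => 2 * k + 1) := fun a b h => by simp_all
  obtain ⟨s, hodd⟩ := hzeta.summable.comp_injective hinj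
  have hs : s = π ^ 2 / 8 := by
    have := hzeta.unique (HasSum.even_add_odd (f := fun n : ℕ => 1 / (n : ℝ) ^ 2) heven hodd)
    linarith
  simpa [hs, Function.comp_def] using hodd

theorem hasSum_neg_one_pow_div_odd_cube :
    HasSum (fun k : ℕ => (-1) ^ k / (2 * (k : ℝ) + 1) ^ 3) (π ^ 3 / 32) := by
  have hinj : Function.Injective (fun k : ℕ => 2 * k + 1) := fun a b h => by simp_all
  have hsin_odd : ∀ k : ℕ, Real.sin (π * ((2 * k + 1 : ℕ) : ℝ) / 2) = (-1) ^ k := by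
    intro k
    rw [show π * ((2 * k + 1 : ℕ) : ℝ) / 2 = k * π + π / 2 by push_cast; ring,
      Real.sin_add_pi_div_two, Real.cos_nat_mul_pi]
  have hsin_even : ∀ n ∉ Set.range (fun k : ℕ => 2 * k + 1),
      (1 : ℝ) / (n : ℝ) ^ 3 * Real.sin (π * n / 2) = 0 := by
    intro n hn
    obtain ⟨m, rfl⟩ : Even n := Nat.not_odd_iff_even.1 fun ⟨m, hm⟩ => hn ⟨m, hm.symm⟩
    rw [show π * ((m + m : ℕ) : ℝ) / 2 = m * π by push_cast; ring, Real.sin_nat_mul_pi, mul_zero]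
  have h := (hinj.hasSum_iff hsin_even).2 hasSum_L_function_mod_four_eval_three
  simp only [Function.comp_def, hsin_odd] at h
  simpa [div_eq_mul_inv, mul_comm] using h

theorem hasSum_leibniz_tail_pairs :
    HasSum (fun j : ℕ => 1 / (4 * (j : ℝ) + 3) - 1 / (4 * j + 5)) (1 - π / 4) := by
  have h : Tendsto (fun n => ∑ i ∈ range n, (-1 : ℝ) ^ (i + 1) / (2 * i + 1)) atTop
      (𝓝 (-(π / 4))) := by
    simpa [pow_succ, neg_div] using tendsto_sum_pi_div_four.neg
  have hpair : ∀ j : ℕ, (-1 : ℝ) ^ (2 * j + 1 + 1) / (2 * ((2 * j + 1 : ℕ) : ℝ) + 1)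
      + (-1) ^ (2 * j + 2 + 1) / (2 * ((2 * j + 2 : ℕ) : ℝ) + 1)
      = 1 / (4 * (j : ℝ) + 3) - 1 / (4 * j + 5) := by
    intro j
    simp only [pow_succ, pow_mul]
    push_cast
    ring
  have hnonneg : ∀ j : ℕ, 0 ≤ 1 / (4 * (j : ℝ) + 3) - 1 / (4 * j + 5) := fun j =>
    sub_nonneg.2 (one_div_le_one_div_of_le (by positivity) (by linarith))
  have key := hasSum_shifted_pairs_of_nonneg h fun j => hpair j ▸ hnonneg j
  simp only [hpair] at key
  convert key using 1
  norm_num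
  ring

theorem hasSum_odd_sq_tail_pairs :
    HasSum (fun j : ℕ => 1 / (4 * (j : ℝ) + 3) ^ 2 + 1 / (4 * j + 5) ^ 2) (π ^ 2 / 8 - 1) := by
  have hpair : ∀ j : ℕ, 1 / (2 * ((2 * j + 1 : ℕ) : ℝ) + 1) ^ 2
      + 1 / (2 * ((2 * j + 2 : ℕ) : ℝ) + 1) ^ 2
      = 1 / (4 * (j : ℝ) + 3) ^ 2 + 1 / (4 * j + 5) ^ 2 := by
    intro j
    push_cast
    ring
  have key := hasSum_shifted_pairs_of_nonneg hasSum_one_div_odd_sq.tendsto_sum_nat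
    fun j => hpair j ▸ (by positivity)
  simp only [hpair] at key
  convert key using 1
  norm_num

theorem hasSum_neg_one_pow_odd_cube_tail_pairs :
    HasSum (fun j : ℕ => 1 / (4 * (j : ℝ) + 3) ^ 3 - 1 / (4 * j + 5) ^ 3) (1 - π ^ 3 / 32) := by
  have hpair : ∀ j : ℕ, -((-1 : ℝ) ^ (2 * j + 1) / (2 * ((2 * j + 1 : ℕ) : ℝ) + 1) ^ 3)
      + -((-1) ^ (2 * j + 2) / (2 * ((2 * j + 2 : ℕ) : ℝ) + 1) ^ 3)
      = 1 / (4 * (j : ℝ) + 3) ^ 3 - 1 / (4 * j + 5) ^ 3 := by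
    intro j
    simp only [pow_succ, pow_mul]
    push_cast
    ring
  have hnonneg : ∀ j : ℕ, 0 ≤ 1 / (4 * (j : ℝ) + 3) ^ 3 - 1 / (4 * j + 5) ^ 3 := fun j =>
    sub_nonneg.2 (one_div_le_one_div_of_le (by positivity) (by gcongr; linarith))
  have key := hasSum_shifted_pairs_of_nonneg hasSum_neg_one_pow_div_odd_cube.neg.tendsto_sum_nat
    fun j => hpair j ▸ hnonneg j
  simp only [hpair] at key
  convert key using 1
  norm_num
  ring

theorem inv_sq_geometric_partial_fractions {y : ℝ} (hy : y ≠ 0) (hy_sub : y - 1 ≠ 0)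
    (hy_add : y + 1 ≠ 0) :
    (y ^ 2)⁻¹ * (1 + (y ^ 2)⁻¹) / (1 - (y ^ 2)⁻¹) ^ 3
      = 1 / 8 * (1 / (y - 1) - 1 / (y + 1)) + 3 / 8 * (1 / (y - 1) ^ 2 + 1 / (y + 1) ^ 2)
        + 1 / 4 * (1 / (y - 1) ^ 3 - 1 / (y + 1) ^ 3) := by
  have hq : 1 - (y ^ 2)⁻¹ = (y - 1) * (y + 1) / y ^ 2 := by
    field_simp
    ring
  rw [hq]
  field_simp
  ring

theorem hasSum_sq_mul_inv_sq_four_mul_pow (k : ℕ) :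
    HasSum (fun n : ℕ => ((n : ℝ) + 1) ^ 2 * ((4 * ((k : ℝ) + 1)) ^ 2)⁻¹ ^ (n + 1))
      (1 / 8 * (1 / (4 * (k : ℝ) + 3) - 1 / (4 * k + 5))
        + 3 / 8 * (1 / (4 * (k : ℝ) + 3) ^ 2 + 1 / (4 * k + 5) ^ 2)
        + 1 / 4 * (1 / (4 * (k : ℝ) + 3) ^ 3 - 1 / (4 * k + 5) ^ 3)) := by
  have hk : (0 : ℝ) ≤ k := k.cast_nonneg
  have hlt : ‖((4 * ((k : ℝ) + 1)) ^ 2)⁻¹‖ < 1 := by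
    rw [norm_inv, Real.norm_of_nonneg (by positivity)]
    exact inv_lt_one_of_one_lt₀ (by nlinarith)
  have hpartial := inv_sq_geometric_partial_fractions (y := 4 * ((k : ℝ) + 1)) (by positivity)
    (by linarith) (by linarith)
  rw [show 4 * ((k : ℝ) + 1) - 1 = 4 * k + 3 by ring,
    show 4 * ((k : ℝ) + 1) + 1 = 4 * k + 5 by ring] at hpartial
  rw [← hpartial]
  exact hasSum_sq_mul_geometric hlt

theorem zetaR_two_mul_mul_sq_div_sixteen_pow (n : ℕ) :
    zetaR (2 * (n + 1)) * ((n : ℝ) + 1) ^ 2 / 16 ^ (n + 1)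
      = ∑' k : ℕ, ((n : ℝ) + 1) ^ 2 * ((4 * ((k : ℝ) + 1)) ^ 2)⁻¹ ^ (n + 1) := by
  rw [zetaR, ← tsum_mul_right, ← tsum_div_const]
  congr 1 with k
  rw [inv_pow, mul_pow, show (4 : ℝ) ^ 2 = 16 by norm_num, mul_pow, pow_mul]
  field_simp

theorem zeta_series_sixteen_n_sq :
    ∑' n : ℕ, zetaR (2 * (n + 1)) * ((n : ℝ) + 1) ^ 2 / 16 ^ (n + 1) =
      (π / 32) * (3 * π / 2 - π ^ 2 / 4 - 1) := by
  have htotal : HasSum (fun k : ℕ => 1 / 8 * (1 / (4 * (k : ℝ) + 3) - 1 / (4 * k + 5))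
        + 3 / 8 * (1 / (4 * (k : ℝ) + 3) ^ 2 + 1 / (4 * k + 5) ^ 2)
        + 1 / 4 * (1 / (4 * (k : ℝ) + 3) ^ 3 - 1 / (4 * k + 5) ^ 3))
      ((π / 32) * (3 * π / 2 - π ^ 2 / 4 - 1)) := by
    rw [show (π / 32) * (3 * π / 2 - π ^ 2 / 4 - 1)
      = 1 / 8 * (1 - π / 4) + 3 / 8 * (π ^ 2 / 8 - 1) + 1 / 4 * (1 - π ^ 3 / 32) by ring]
    exact ((hasSum_leibniz_tail_pairs.mul_left _).add
      (hasSum_odd_sq_tail_pairs.mul_left _)).add (hasSum_neg_one_pow_odd_cube_tail_pairs.mul_left _)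
  rw [tsum_congr zetaR_two_mul_mul_sq_div_sixteen_pow]
  exact (hasSum_tsum_swap_of_nonneg (fun k n => by positivity) hasSum_sq_mul_inv_sq_four_mul_pow
    htotal).tsum_eq
end
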